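/- The 5-dimensional nilpotent commutative associative algebra A₀₃ degenerates to A₀₄: the structure λ of A₀₄ lies in the closure of the GL(5,ℂ)-orbit O(μ) of the structure μ of A₀₃ (closure in the standard topology on the space of bilinear maps ℂ⁵ × ℂ⁵ → ℂ⁵). -/

import Mathlib

open ContinuousLinearMap

/-- The underlying space `ℂⁿ`. -/
abbrev Vn (n : ℕ) := Fin n → ℂ

/-- The space of bilinear maps `ℂⁿ × ℂⁿ → ℂⁿ` (as continuous linear maps in two
arguments), carrying its standard topology as a finite-dimensional complex vector space. -/
abbrev Bil (n : ℕ) := Vn n →L[ℂ] Vn n →L[ℂ] Vn n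

/-- The action of `GL(n, ℂ)` on bilinear maps: `(g · μ)(x, y) = g (μ (g⁻¹ x) (g⁻¹ y))`. -/
noncomputable def act {n : ℕ} (g : Vn n ≃L[ℂ] Vn n) (μ : Bil n) : Bil n :=
  ((compL ℂ (Vn n) (Vn n) (Vn n)).flip (g.symm : Vn n →L[ℂ] Vn n)).comp
    (((compL ℂ (Vn n) (Vn n) (Vn n)) (g : Vn n →L[ℂ] Vn n)).comp
      (μ.comp (g.symm : Vn n →L[ℂ] Vn n)))

@[simp] lemma act_apply {n : ℕ} (g : Vn n ≃L[ℂ] Vn n) (μ : Bil n) (x y : Vn n) :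
    act g μ x y = g (μ (g.symm x) (g.symm y)) := rfl

/-- The orbit `O(μ)` of a bilinear map under the `GL(n, ℂ)`-action. -/
noncomputable def orbit {n : ℕ} (μ : Bil n) : Set (Bil n) :=
  {ν | ∃ g : Vn n ≃L[ℂ] Vn n, ν = act g μ}

/-- The standard basis `e₁, …, e₅` of `ℂ⁵` (zero-indexed: `e i` is `e_{i+1}`). -/
def e (i : Fin 5) : Vn 5 := Pi.single i 1

/-- Multiplication table of the algebra `𝐀03` (entry `(i, j)` is `eᵢ · eⱼ`). -/
def tblA03 : Fin 5 → Fin 5 → Vn 5 :=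
  ![![e 2, 0, e 4, 0, 0],
   ![0, e 3, 0, e 4, 0],
   ![e 4, 0, 0, 0, 0],
   ![0, e 4, 0, 0, 0],
   ![0, 0, 0, 0, 0]]

/-- Multiplication table of the algebra `𝐀04` (entry `(i, j)` is `eᵢ · eⱼ`). -/
def tblA04 : Fin 5 → Fin 5 → Vn 5 :=
  ![![e 2, e 3, 0, e 4, 0],
   ![e 3, 0, e 4, 0, 0],
   ![0, e 4, 0, 0, 0],
   ![e 4, 0, 0, 0, 0],
   ![0, 0, 0, 0, 0]]

/-!
Put `E₁ = e₁ - e₂`, `E₂ = t (e₁ + e₂)`, `E₃ = e₃ + e₄`, `E₄ = t (e₃ - e₄)`, `E₅ = 2t e₅`.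
For `t ≠ 0` this is a basis, and in it `A₀₃` has exactly the table of `A₀₄` except for the
extra product `E₂² = t² E₃`. So the orbit of `μ` contains `λ + t² ν` for every `t ≠ 0`,
where `ν(x, y) = x₂ y₂ e₃`, and letting `t → 0` gives `λ`.
-/

theorem mem_closure_of_add_sq_smul_mem {𝕜 E : Type*} [NontriviallyNormedField 𝕜]
    [AddCommGroup E] [Module 𝕜 E] [TopologicalSpace E] [IsTopologicalAddGroup E]
    [ContinuousSMul 𝕜 E] {s : Set E} {x v : E} (h : ∀ t : 𝕜, t ≠ 0 → x + t ^ 2 • v ∈ s) :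
    x ∈ closure s := by
  have hcont : Continuous fun t : 𝕜 => x + t ^ 2 • v := by fun_prop
  have hmaps : Set.MapsTo (fun t : 𝕜 => x + t ^ 2 • v) {0}ᶜ s := h
  simpa using hcont.continuousWithinAt.mem_closure (x := 0) (by simp) hmaps

lemma bilin_apply_eq_sum {n : ℕ} (B : Bil n) (x y : Vn n) :
    B x y = ∑ i, ∑ j, (x i * y j) • B (Pi.single i 1) (Pi.single j 1) := by
  conv_lhs => rw [pi_eq_sum_univ' x, pi_eq_sum_univ' y]
  simp only [map_sum, map_smul, sum_apply, smul_apply, Finset.smul_sum, smul_smul]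
  rw [Finset.sum_comm]
  simp only [mul_comm]

lemma single_one_eq_e (i : Fin 5) : Pi.single i 1 = e i := rfl

lemma apply_eq_of_tblA03 {μ : Bil 5} (hμ : ∀ i j : Fin 5, μ (e i) (e j) = tblA03 i j)
    (x y : Vn 5) :
    μ x y = ![0, 0, x 0 * y 0, x 1 * y 1, x 0 * y 2 + x 2 * y 0 + x 1 * y 3 + x 3 * y 1] := by
  rw [bilin_apply_eq_sum]
  simp only [single_one_eq_e, hμ]
  ext k
  fin_cases k <;> simp [Fin.sum_univ_five, tblA03, e]
  ring

lemma apply_eq_of_tblA04 {lam : Bil 5} (hlam : ∀ i j : Fin 5, lam (e i) (e j) = tblA04 i j)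
    (x y : Vn 5) :
    lam x y = ![0, 0, x 0 * y 0, x 0 * y 1 + x 1 * y 0,
      x 0 * y 3 + x 3 * y 0 + x 1 * y 2 + x 2 * y 1] := by
  rw [bilin_apply_eq_sum]
  simp only [single_one_eq_e, hlam]
  ext k
  fin_cases k <;> simp [Fin.sum_univ_five, tblA04, e]
  ring

noncomputable def perturbation : Bil 5 :=
  (proj 1 : Vn 5 →L[ℂ] ℂ).smulRight ((proj 1 : Vn 5 →L[ℂ] ℂ).smulRight (e 2))

lemma perturbation_apply (x y : Vn 5) : perturbation x y = ![0, 0, x 1 * y 1, 0, 0] := by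
  ext k
  fin_cases k <;> simp [perturbation, e]

/-- The inverse sends `e₁, …, e₅` to the basis `E₁, …, E₅` of the header. -/
noncomputable def deformedBasisEquiv (t : ℂ) (ht : t ≠ 0) : Vn 5 ≃L[ℂ] Vn 5 :=
  LinearEquiv.toContinuousLinearEquiv
  { toFun := fun y => ![(y 0 - y 1) / 2, (y 0 + y 1) / (2 * t), (y 2 + y 3) / 2,
      (y 2 - y 3) / (2 * t), y 4 / (2 * t)]
    invFun := fun x => ![x 0 + t * x 1, -x 0 + t * x 1, x 2 + t * x 3, x 2 - t * x 3,
      2 * t * x 4]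
    map_add' := fun x y => by ext k; fin_cases k <;> simp <;> ring
    map_smul' := fun c x => by ext k; fin_cases k <;> simp <;> ring
    left_inv := fun y => by ext k; fin_cases k <;> simp <;> field_simp <;> ring
    right_inv := fun x => by ext k; fin_cases k <;> simp <;> field_simp <;> ring }

lemma act_deformedBasisEquiv {μ lam : Bil 5}
    (hμ : ∀ i j : Fin 5, μ (e i) (e j) = tblA03 i j)
    (hlam : ∀ i j : Fin 5, lam (e i) (e j) = tblA04 i j) (t : ℂ) (ht : t ≠ 0) :
    act (deformedBasisEquiv t ht) μ = lam + t ^ 2 • perturbation := by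
  ext x y k
  simp only [act_apply, add_apply, smul_apply, apply_eq_of_tblA03 hμ, apply_eq_of_tblA04 hlam,
    perturbation_apply]
  fin_cases k <;> simp [deformedBasisEquiv] <;> field_simp <;> ring

/-- The $5$-dimensional nilpotent commutative associative algebra `𝐀03` degenerates to
`𝐀04`: the structure `λ` of `𝐀04` lies in the closure of
the `GL(5, ℂ)`-orbit `O(μ)` of the structure `μ` of `𝐀03`. -/
theorem A03_deg_A04 (μ lam : Bil 5)
    (hμ : ∀ i j : Fin 5, μ (e i) (e j) = tblA03 i j)
    (hlam : ∀ i j : Fin 5, lam (e i) (e j) = tblA04 i j) :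
    lam ∈ closure (orbit μ) := by
  exact mem_closure_of_add_sq_smul_mem fun t ht =>
    ⟨deformedBasisEquiv t ht, (act_deformedBasisEquiv hμ hlam t ht).symm⟩
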